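/- arXiv:2410.09222 — 3 statements merged into one kernel-verified Lean document; each statement's English description precedes it below -/
import Mathlib

section
/- Let μ : ℝ^n → ℝ be differentiable with ∂μ/∂x_j (x) ≥ 0 for all x and all j in a set S, and ∂μ/∂x_j (x) ≤ 0 for all x and all j ∉ S. Define D to be the diagonal 0-1 matrix with D_{jj} = 1 iff j ∈ S, and μ_d(z₁, z₂) := μ(D z₁ + (I − D) z₂). Then for any z̲ ≤ x ≤ z̄ componentwise, μ_d(z̲, z̄) ≤ μ(x) ≤ μ_d(z̄, z̲). -/
lemma mixed_mono {n : ℕ} (μ : (Fin n → ℝ) → ℝ)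
    (hdiff : Differentiable ℝ μ)
    (S : Finset (Fin n))
    (hpos : ∀ x : Fin n → ℝ, ∀ j ∈ S, 0 ≤ fderiv ℝ μ x (Pi.single j 1))
    (hneg : ∀ x : Fin n → ℝ, ∀ j ∉ S, fderiv ℝ μ x (Pi.single j 1) ≤ 0)
    (a b : Fin n → ℝ) (hS : ∀ j ∈ S, a j ≤ b j) (hSc : ∀ j ∉ S, b j ≤ a j) :
    μ a ≤ μ b := by
  set g : ℝ → ℝ := fun t => μ (a + t • (b - a)) with hg
  have hder : ∀ t : ℝ, HasDerivAt g (fderiv ℝ μ (a + t • (b - a)) (b - a)) t := by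
    intro t
    have h1 : HasDerivAt (fun t : ℝ => a + t • (b - a)) (b - a) t := by
      simpa using ((hasDerivAt_id t).smul_const (b - a)).const_add a
    exact (hdiff.differentiableAt.hasFDerivAt).comp_hasDerivAt t h1
  have hnonneg : ∀ y : Fin n → ℝ, 0 ≤ fderiv ℝ μ y (b - a) := by
    intro y
    have hrepr : (b - a) = ∑ j : Fin n, (b j - a j) • (Pi.single j 1 : Fin n → ℝ) := by
      rw [pi_eq_sum_univ (b - a)]
      refine Finset.sum_congr rfl fun j _ => ?_
      simp only [Pi.sub_apply]
      congr 1
      ext k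
      simp [Pi.single_apply, eq_comm]
    rw [hrepr, map_sum]
    apply Finset.sum_nonneg
    intro j _
    rw [map_smul]
    by_cases hj : j ∈ S
    · exact mul_nonneg (sub_nonneg.mpr (hS j hj)) (hpos y j hj)
    · exact mul_nonneg_iff.mpr (Or.inr ⟨sub_nonpos.mpr (hSc j hj), hneg y j hj⟩)
  have hmono : Monotone g := by
    apply monotone_of_deriv_nonneg
    · exact fun t => (hder t).differentiableAt
    · intro t
      rw [(hder t).deriv]
      exact hnonneg _
  have h0 : g 0 = μ a := by simp [hg]
  have h1 : g 1 = μ b := by simp [hg]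
  rw [← h0, ← h1]
  exact hmono zero_le_one

theorem stmt_4 {n : ℕ} (μ : (Fin n → ℝ) → ℝ)
    (hdiff : Differentiable ℝ μ)
    (S : Finset (Fin n))
    (hpos : ∀ x : Fin n → ℝ, ∀ j ∈ S, 0 ≤ fderiv ℝ μ x (Pi.single j 1))
    (hneg : ∀ x : Fin n → ℝ, ∀ j ∉ S, fderiv ℝ μ x (Pi.single j 1) ≤ 0)
    (μd : (Fin n → ℝ) → (Fin n → ℝ) → ℝ)
    (hμd : ∀ z₁ z₂, μd z₁ z₂ = μ (fun j => if j ∈ S then z₁ j else z₂ j))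
    (zl zu x : Fin n → ℝ) (h1 : zl ≤ x) (h2 : x ≤ zu) :
    μd zl zu ≤ μ x ∧ μ x ≤ μd zu zl := by
  constructor
  · rw [hμd]
    apply mixed_mono μ hdiff S hpos hneg
    · intro j hj; simp [hj]; exact h1 j
    · intro j hj; simp [hj]; exact h2 j
  · rw [hμd]
    apply mixed_mono μ hdiff S hpos hneg
    · intro j hj; simp [hj]; exact h2 j
    · intro j hj; simp [hj]; exact h1 j
end

section
/- Let μ : ℝ^n → ℝ^p be differentiable with entrywise Jacobian bounds J̲^μ ≤ J_μ(x) ≤ J̄^μ for all x, and suppose each Jacobian entry has constant sign. Let μ_d be the tight decomposition function defined coordinatewise by μ_{d,i}(z₁,z₂) = μ_i(D^i z₁ + (I − D^i) z₂) with D^i = diag(max(sgn(J̄^μ_i), 0)). Then for any interval [z̲, z̄] ⊆ ℝ^n, μ_d(z̄, z̲) − μ_d(z̲, z̄) ≤ F_μ (z̄ − z̲) componentwise, where F_μ = (J̄^μ)⁺ + (J̲^μ)⁻. -/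
/-!
The points `μd zu zl` and `μd zl zu` evaluate `μ i` at two opposite corners `y`, `x` of the box:
`y j = zu j` where `Ju i j ≥ 0` and `y j = zl j` elsewhere. By the mean value theorem on the
segment `[x, y]`, `μ y i - μ x i = ∑ j, J i j * (y - x) j` for the Jacobian `J` at some point, and
`(y - x) j = ±(zu - zl) j` with the sign of `Ju i j`, so each term is at most
`(max (Ju i j) 0 + max (-Jl i j) 0) * (zu - zl) j`.
-/

open Matrix

theorem mul_ite_neg_le_posPart_add_negPart_mul {l a u δ : ℝ} (hl : l ≤ a) (hu : a ≤ u)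
    (hδ : 0 ≤ δ) : a * (if 0 ≤ u then δ else -δ) ≤ (max u 0 + max (-l) 0) * δ := by
  split_ifs <;>
    nlinarith [le_max_left u 0, le_max_right u 0, le_max_left (-l) 0, le_max_right (-l) 0]

theorem dotProduct_ite_neg_le {ι : Type*} [Fintype ι] {l a u δ : ι → ℝ} (hl : l ≤ a)
    (hu : a ≤ u) (hδ : 0 ≤ δ) :
    a ⬝ᵥ (fun j => if 0 ≤ u j then δ j else -δ j) ≤
      (fun j => max (u j) 0 + max (-l j) 0) ⬝ᵥ δ :=
  Finset.sum_le_sum fun j _ => mul_ite_neg_le_posPart_add_negPart_mul (hl j) (hu j) (hδ j)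

theorem stmt_5_general {n p : ℕ} (μ : (Fin n → ℝ) → (Fin p → ℝ))
    (hdiff : Differentiable ℝ μ)
    (Jl Ju : Matrix (Fin p) (Fin n) ℝ)
    (hJl : ∀ x i j, Jl i j ≤ fderiv ℝ μ x (Pi.single j 1) i)
    (hJu : ∀ x i j, fderiv ℝ μ x (Pi.single j 1) i ≤ Ju i j)
    (μd : (Fin n → ℝ) → (Fin n → ℝ) → (Fin p → ℝ))
    (hμd : ∀ z₁ z₂ i, μd z₁ z₂ i = μ (fun j => if 0 ≤ Ju i j then z₁ j else z₂ j) i)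
    (F : Matrix (Fin p) (Fin n) ℝ)
    (hF : ∀ i j, F i j = max (Ju i j) 0 + max (-(Jl i j)) 0)
    (zl zu : Fin n → ℝ) (hz : zl ≤ zu) :
    μd zu zl - μd zl zu ≤ F.mulVec (zu - zl) := by
  intro i
  set x : Fin n → ℝ := fun j => if 0 ≤ Ju i j then zl j else zu j
  set y : Fin n → ℝ := fun j => if 0 ≤ Ju i j then zu j else zl j
  obtain ⟨z, -, hmvt⟩ := domain_mvt (f := fun w => μ w i) (s := Set.univ)
    (fun w _ => (hasFDerivAt_pi'.1 (hdiff w).hasFDerivAt i).hasFDerivWithinAt)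
    convex_univ (Set.mem_univ x) (Set.mem_univ y)
  have hyx : y - x = fun j => if 0 ≤ Ju i j then (zu - zl) j else -(zu - zl) j := by
    ext j; split_ifs <;> simp [x, y, *]
  set J := LinearMap.toMatrix' (fderiv ℝ μ z : (Fin n → ℝ) →ₗ[ℝ] Fin p → ℝ)
  have hJ : ∀ j, J i j = fderiv ℝ μ z (Pi.single j 1) i := LinearMap.toMatrix'_apply _ i
  calc (μd zu zl - μd zl zu) i = μ y i - μ x i := by simp only [Pi.sub_apply, hμd, x, y]
    _ = J i ⬝ᵥ (y - x) := by rw [hmvt, ← mulVec, LinearMap.toMatrix'_mulVec]; rfl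
    _ ≤ F i ⬝ᵥ (zu - zl) := by
      rw [hyx, show F i = _ from funext (hF i)]
      exact dotProduct_ite_neg_le (fun j => (hJ j).symm ▸ hJl z i j)
        (fun j => (hJ j).symm ▸ hJu z i j) (sub_nonneg.2 hz)

theorem stmt_5 {n p : ℕ} (μ : (Fin n → ℝ) → (Fin p → ℝ))
    (hdiff : Differentiable ℝ μ)
    (Jl Ju : Matrix (Fin p) (Fin n) ℝ)
    (hJl : ∀ x i j, Jl i j ≤ fderiv ℝ μ x (Pi.single j 1) i)
    (hJu : ∀ x i j, fderiv ℝ μ x (Pi.single j 1) i ≤ Ju i j)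
    (hsign : ∀ i j, (∀ x, 0 ≤ fderiv ℝ μ x (Pi.single j 1) i) ∨
                    (∀ x, fderiv ℝ μ x (Pi.single j 1) i ≤ 0))
    (μd : (Fin n → ℝ) → (Fin n → ℝ) → (Fin p → ℝ))
    (hμd : ∀ z₁ z₂ i, μd z₁ z₂ i = μ (fun j => if 0 ≤ Ju i j then z₁ j else z₂ j) i)
    (F : Matrix (Fin p) (Fin n) ℝ)
    (hF : ∀ i j, F i j = max (Ju i j) 0 + max (-(Jl i j)) 0)
    (zl zu : Fin n → ℝ) (hz : zl ≤ zu) :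
    μd zu zl - μd zl zu ≤ F.mulVec (zu - zl) :=
  stmt_5_general μ hdiff Jl Ju hJl hJu μd hμd F hF zl zu hz
end

section
/- Consider the discrete-time system x_{k+1} = f(x_k) + B u_k + W w_k with f(x) = Ax + φ(x), where φ admits a decomposition function φ_d satisfying φ_d(z̲, z̄) ≤ φ(x) ≤ φ_d(z̄, z̲) whenever z̲ ≤ x ≤ z̄, and w_k ∈ [w̲, w̄]. Define the framer dynamics x̄_{k+1} = A⁺ x̄_k − A⁻ x̲_k + φ_d(x̄_k, x̲_k) + B u_k + W⁺ w̄ − W⁻ w̲ and x̲_{k+1} = A⁺ x̲_k − A⁻ x̄_k + φ_d(x̲_k, x̄_k) + B u_k + W⁺ w̲ − W⁻ w̄. If x̲_0 ≤ x_0 ≤ x̄_0, then x̲_k ≤ x_k ≤ x̄_k for all k ≥ 0. -/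
open Matrix

lemma aux_bound {n p : ℕ} (M Mp Mm : Matrix (Fin n) (Fin p) ℝ)
    (hMp : ∀ i j, Mp i j = max (M i j) 0) (hMm : Mm = Mp - M)
    (vl v vu : Fin p → ℝ) (h1 : vl ≤ v) (h2 : v ≤ vu) :
    Mp.mulVec vl - Mm.mulVec vu ≤ M.mulVec v ∧
      M.mulVec v ≤ Mp.mulVec vu - Mm.mulVec vl := by
  subst hMm
  have hp : ∀ i j, 0 ≤ Mp i j := fun i j => by rw [hMp]; exact le_max_right _ _
  have hm : ∀ i j, 0 ≤ Mp i j - M i j := fun i j => by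
    rw [hMp]; simp [sub_nonneg, le_max_left]
  constructor <;> intro i <;>
    simp only [Pi.sub_apply, mulVec, dotProduct, Matrix.sub_apply,
      ← Finset.sum_sub_distrib] <;>
    apply Finset.sum_le_sum <;> intro j _ <;>
    nlinarith [hp i j, hm i j, h1 j, h2 j, mul_le_mul_of_nonneg_left (h1 j) (hp i j),
      mul_le_mul_of_nonneg_left (h2 j) (hm i j),
      mul_le_mul_of_nonneg_left (h2 j) (hp i j),
      mul_le_mul_of_nonneg_left (h1 j) (hm i j)]

theorem stmt_7 {n m nw : ℕ}
    (A : Matrix (Fin n) (Fin n) ℝ) (B : Matrix (Fin n) (Fin m) ℝ)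
    (W : Matrix (Fin n) (Fin nw) ℝ)
    (Ap Am : Matrix (Fin n) (Fin n) ℝ) (Wp Wm : Matrix (Fin n) (Fin nw) ℝ)
    (hAp : ∀ i j, Ap i j = max (A i j) 0) (hAm : Am = Ap - A)
    (hWp : ∀ i j, Wp i j = max (W i j) 0) (hWm : Wm = Wp - W)
    (φ : (Fin n → ℝ) → (Fin n → ℝ))
    (φd : (Fin n → ℝ) → (Fin n → ℝ) → (Fin n → ℝ))
    (hφd : ∀ zl x zu : Fin n → ℝ, zl ≤ x → x ≤ zu → φd zl zu ≤ φ x ∧ φ x ≤ φd zu zl)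
    (wl wu : Fin nw → ℝ)
    (x xl xu : ℕ → Fin n → ℝ) (u : ℕ → Fin m → ℝ) (w : ℕ → Fin nw → ℝ)
    (hw : ∀ k, wl ≤ w k ∧ w k ≤ wu)
    (hdyn : ∀ k, x (k + 1) =
      A.mulVec (x k) + φ (x k) + B.mulVec (u k) + W.mulVec (w k))
    (hupper : ∀ k, xu (k + 1) =
      Ap.mulVec (xu k) - Am.mulVec (xl k) + φd (xu k) (xl k) + B.mulVec (u k)
        + Wp.mulVec wu - Wm.mulVec wl)
    (hlower : ∀ k, xl (k + 1) =
      Ap.mulVec (xl k) - Am.mulVec (xu k) + φd (xl k) (xu k) + B.mulVec (u k)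
        + Wp.mulVec wl - Wm.mulVec wu)
    (h0 : xl 0 ≤ x 0 ∧ x 0 ≤ xu 0) :
    ∀ k, xl k ≤ x k ∧ x k ≤ xu k := by
  intro k
  induction k with
  | zero => exact h0
  | succ k ih =>
    obtain ⟨ih1, ih2⟩ := ih
    obtain ⟨hA1, hA2⟩ := aux_bound A Ap Am hAp hAm (xl k) (x k) (xu k) ih1 ih2
    obtain ⟨hW1, hW2⟩ := aux_bound W Wp Wm hWp hWm wl (w k) wu (hw k).1 (hw k).2
    obtain ⟨hφ1, hφ2⟩ := hφd (xl k) (x k) (xu k) ih1 ih2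
    rw [hdyn k, hupper k, hlower k]
    constructor <;> intro i <;>
      simp only [Pi.add_apply, Pi.sub_apply]
    · have t1 := hA1 i; have t2 := hW1 i; have t3 := hφ1 i
      simp only [Pi.sub_apply] at t1 t2; linarith
    · have t1 := hA2 i; have t2 := hW2 i; have t3 := hφ2 i
      simp only [Pi.sub_apply] at t1 t2; linarith
end
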